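/- arXiv:2001.11407 — 4 statements merged into one kernel-verified Lean document; each statement's English description precedes it below -/
import Mathlib

section
/- The unique solution in positive integers of the Diophantine equation 2x^3 - y^3 = 1 is (x, y) = (1, 1); that is, if x and y are positive integers with 2x^3 - y^3 = 1, then x = 1 and y = 1. -/
/-!
Since `1 + y³ = 2x³`, the pair `(1, y)` is a coprime solution of `X³ + Y³ = 2Z³`, and Euler's
descent shows that every coprime solution has `X = ±Y`. Writing `X = p + q`, `Y = p - q` turns the
equation into `p (p² + 3q²) = Z³` with `p, q` coprime of opposite parity, so (up to a factor `9`
when `3 ∣ p`) both factors are cubes. Unique factorisation in the Eisenstein integers `ℤ[ζ₃]`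
turns a coprime `p² + 3q² = s³` into `p + q√-3 = (C + D√-3)³`, that is `p = C (C² - 9D²)` and
`q = 3D (C² - D²)`. The cube `C (C - 3D) (C + 3D)` (resp. `D (D - C) (D + C)` when `3 ∣ p`) then
splits into pairwise coprime cubes `e³, f³, g³` with `f³ + g³ = 2e³`, a solution with smaller `|Z|`.
-/

open NumberField

namespace Int

theorem even_mul_mul_sub (c d : ℤ) : Even (c * d * (c - d)) := by
  simp only [Int.even_mul, Int.even_sub]
  tauto

theorem isCoprime_three_sq_add_three_mul_sq {p q : ℤ} (h3 : ¬ 3 ∣ p) :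
    IsCoprime 3 (p ^ 2 + 3 * q ^ 2) := by
  rw [Int.prime_three.coprime_iff_not_dvd]
  exact fun hdvd => h3 (Int.prime_three.dvd_of_dvd_pow ((dvd_add_left (dvd_mul_right 3 _)).1 hdvd))

theorem isCoprime_six_sq_add_three_mul_sq {p q : ℤ} (hodd : Odd (p + q)) (h3 : ¬ 3 ∣ p) :
    IsCoprime 6 (p ^ 2 + 3 * q ^ 2) := by
  have h2 : IsCoprime 2 (p ^ 2 + 3 * q ^ 2) := by
    rw [Int.isCoprime_two_left]
    simp only [← Int.not_even_iff_odd, parity_simps] at hodd ⊢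
    tauto
  simpa using (isCoprime_three_sq_add_three_mul_sq h3).mul_left h2

end Int

namespace IsPrimitiveRoot

variable {K : Type*} [Field K] {ζ : K} (hζ : IsPrimitiveRoot ζ 3)

local notation "η" => hζ.toInteger

theorem toInteger_sq_add_toInteger_add_one : η ^ 2 + η + 1 = 0 := by
  simpa using IsCyclotomicExtension.Rat.Three.eta_sq_add_eta_add_one hζ

theorem int_add_int_mul_toInteger_pow_three (c d : ℤ) :
    ((c : 𝓞 K) + d * η) ^ 3 =
      ((c ^ 3 + d ^ 3 - 3 * c * d ^ 2 : ℤ) : 𝓞 K) + ((3 * c * d * (c - d) : ℤ) : 𝓞 K) * η := by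
  push_cast
  linear_combination (3 * c * d ^ 2 + d ^ 3 * (η - 1) : 𝓞 K) * hζ.toInteger_sq_add_toInteger_add_one

theorem exists_pow_three_eq_int_add_two_mul_toInteger_pow_three (c d : ℤ) :
    ∃ e f : ℤ, ((c : 𝓞 K) + d * η) ^ 3 = ((e : 𝓞 K) + ((2 * f : ℤ) : 𝓞 K) * η) ^ 3 := by
  have hrel := hζ.toInteger_sq_add_toInteger_add_one
  -- multiplying by `η` keeps the cube and permutes the parities of the coordinates
  have hcube (x : 𝓞 K) : (η * x) ^ 3 = x ^ 3 := by
    rw [mul_pow, hζ.toInteger_cube_eq_one, one_mul]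
  rcases Int.even_or_odd d with ⟨f, rfl⟩ | hd
  · exact ⟨c, f, by push_cast; ring⟩
  rcases Int.even_or_odd c with ⟨f, rfl⟩ | hc
  · refine ⟨d - (f + f), -f, ?_⟩
    rw [← hcube, ← hcube (η * _)]
    congr 1
    push_cast
    linear_combination (f + f + d * (η - 1) : 𝓞 K) * hrel
  · obtain ⟨f, hf⟩ := hc.sub_odd hd
    refine ⟨-d, f, ?_⟩
    rw [← hcube, show c = d + (f + f) by omega]
    congr 1
    push_cast
    linear_combination (d : 𝓞 K) * hrel

variable [CharZero K]

theorem int_add_int_mul_toInteger_inj {a b c d : ℤ} (h : (a : 𝓞 K) + b * η = c + d * η) :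
    a = c ∧ b = d := by
  -- `a - c = (d - b) η` forces the norm `(a - c)² + (a - c) (d - b) + (d - b)²` to vanish
  have hnorm : (a - c) ^ 2 + (a - c) * (d - b) + (d - b) ^ 2 = 0 := by
    have : (((a - c) ^ 2 + (a - c) * (d - b) + (d - b) ^ 2 : ℤ) : 𝓞 K) = 0 := by
      push_cast
      linear_combination ((a - c : 𝓞 K) + (d - b) + (d - b) * η) * h +
        (d - b : 𝓞 K) ^ 2 * hζ.toInteger_sq_add_toInteger_add_one
    exact_mod_cast this
  constructor <;> nlinarith [sq_nonneg (a - c + (d - b)), sq_nonneg (a - c - (d - b))]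

theorem int_add_two_mul_toInteger_ne_toInteger_mul_pow_three {a b c d : ℤ} (ha : Odd a) :
    (a : 𝓞 K) + 2 * b * η ≠ η * (c + d * η) ^ 3 := by
  intro h
  rw [int_add_int_mul_toInteger_pow_three] at h
  have : (a : 𝓞 K) + ((2 * b : ℤ) : 𝓞 K) * η = ((-(3 * c * d * (c - d)) : ℤ) : 𝓞 K) +
      ((c ^ 3 + d ^ 3 - 3 * c * d ^ 2 - 3 * c * d * (c - d) : ℤ) : 𝓞 K) * η := by
    push_cast at h ⊢
    linear_combination h +
      (3 * c * d * (c - d) : 𝓞 K) * hζ.toInteger_sq_add_toInteger_add_one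
  obtain ⟨ha', -⟩ := hζ.int_add_int_mul_toInteger_inj this
  rw [ha', show 3 * c * d * (c - d) = 3 * (c * d * (c - d)) by ring, odd_neg] at ha
  exact Int.not_odd_iff_even.2 ((Int.even_mul_mul_sub c d).mul_left 3) ha

theorem int_add_two_mul_toInteger_ne_toInteger_sq_mul_pow_three {a b c d : ℤ} (ha : Odd a) :
    (a : 𝓞 K) + 2 * b * η ≠ η ^ 2 * (c + d * η) ^ 3 := by
  intro h
  rw [int_add_int_mul_toInteger_pow_three] at h
  have : (a : 𝓞 K) + ((2 * b : ℤ) : 𝓞 K) * η =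
      ((3 * c * d * (c - d) - (c ^ 3 + d ^ 3 - 3 * c * d ^ 2) : ℤ) : 𝓞 K) +
        ((-(c ^ 3 + d ^ 3 - 3 * c * d ^ 2) : ℤ) : 𝓞 K) * η := by
    push_cast at h ⊢
    linear_combination h + (c ^ 3 + d ^ 3 - 3 * c * d ^ 2 + 3 * c * d * (c - d) * (η - 1) : 𝓞 K) *
      hζ.toInteger_sq_add_toInteger_add_one
  obtain ⟨ha', hb⟩ := hζ.int_add_int_mul_toInteger_inj this
  rw [show a = 3 * (c * d * (c - d)) + 2 * b by linear_combination ha' - hb] at ha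
  exact Int.not_odd_iff_even.2 (((Int.even_mul_mul_sub c d).mul_left 3).add (even_two_mul b)) ha

theorem isCoprime_int_add_two_mul_toInteger_int_sub_two_mul_toInteger {p q : ℤ}
    (hpq : IsCoprime p q) (h6 : IsCoprime 6 (p ^ 2 + 3 * q ^ 2)) :
    IsCoprime (((p + q : ℤ) : 𝓞 K) + 2 * q * η) (((p - q : ℤ) : 𝓞 K) - 2 * q * η) := by
  -- the two factors generate an ideal containing `6`, which is coprime to their product
  obtain ⟨m, n, hmn⟩ := hpq
  obtain ⟨u, v, huv⟩ := h6
  have hmn' : (m : 𝓞 K) * p + n * q = 1 := by exact_mod_cast hmn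
  have huv' : (u : 𝓞 K) * 6 + v * (p ^ 2 + 3 * q ^ 2) = 1 := by exact_mod_cast huv
  refine ⟨u * (3 * m - n * (1 + 2 * η)) + v * (((p - q : ℤ) : 𝓞 K) - 2 * q * η),
    u * (3 * m + n * (1 + 2 * η)), ?_⟩
  push_cast
  linear_combination huv' + 6 * u * hmn' -
    (8 * u * n * q + 4 * v * q ^ 2 : 𝓞 K) * hζ.toInteger_sq_add_toInteger_add_one

variable [IsCyclotomicExtension {3} ℚ K]

theorem exists_int_add_int_mul_toInteger (x : 𝓞 K) : ∃ a b : ℤ, x = a + b * η := by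
  have hx : x ∈ Algebra.adjoin ℤ {η} := by
    rw [← hζ.integralPowerBasis_gen, hζ.integralPowerBasis.adjoin_gen_eq_top]
    trivial
  induction hx using Algebra.adjoin_induction with
  | mem x hx => exact ⟨0, 1, by simp_all⟩
  | algebraMap r => exact ⟨r, 0, by simp⟩
  | add x y _ _ hx hy =>
    obtain ⟨a, b, rfl⟩ := hx
    obtain ⟨c, d, rfl⟩ := hy
    exact ⟨a + c, b + d, by push_cast; ring⟩
  | mul x y _ _ hx hy =>
    obtain ⟨a, b, rfl⟩ := hx
    obtain ⟨c, d, rfl⟩ := hy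
    exact ⟨a * c - b * d, a * d + b * c - b * d, by
      push_cast
      linear_combination (b * d : 𝓞 K) * hζ.toInteger_sq_add_toInteger_add_one⟩

variable [NumberField K]

attribute [local instance] IsCyclotomicExtension.Rat.three_pid

theorem exists_int_add_two_mul_toInteger_eq_pow_three {p q s : ℤ} (hpq : IsCoprime p q)
    (hodd : Odd (p + q)) (h3 : ¬ 3 ∣ p) (h : p ^ 2 + 3 * q ^ 2 = s ^ 3) :
    ∃ c d : ℤ, ((p + q : ℤ) : 𝓞 K) + 2 * q * η = ((c : 𝓞 K) + d * η) ^ 3 := by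
  have hnorm : (((p + q : ℤ) : 𝓞 K) + 2 * q * η) * (((p - q : ℤ) : 𝓞 K) - 2 * q * η) =
      (s : 𝓞 K) ^ 3 := by
    rw [← Int.cast_pow, ← h]
    push_cast
    linear_combination (-4 * q ^ 2 : 𝓞 K) * hζ.toInteger_sq_add_toInteger_add_one
  obtain ⟨γ, u, hu⟩ := exists_associated_pow_of_mul_eq_pow'
    (hζ.isCoprime_int_add_two_mul_toInteger_int_sub_two_mul_toInteger hpq
      (Int.isCoprime_six_sq_add_three_mul_sq hodd h3)) hnorm
  obtain ⟨c, d, rfl⟩ := hζ.exists_int_add_int_mul_toInteger γ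
  have hunit := IsCyclotomicExtension.Rat.Three.Units.mem hζ u
  simp only [List.mem_cons, List.not_mem_nil, or_false] at hunit
  rcases hunit with rfl | rfl | rfl | rfl | rfl | rfl
  · exact ⟨c, d, by rw [← hu]; simp⟩
  · exact ⟨-c, -d, by rw [← hu]; push_cast; ring⟩
  · exact absurd (by rw [← hu]; simp; ring)
      (hζ.int_add_two_mul_toInteger_ne_toInteger_mul_pow_three (c := c) (d := d) hodd)
  · exact absurd (by rw [← hu]; simp; ring)
      (hζ.int_add_two_mul_toInteger_ne_toInteger_mul_pow_three (c := -c) (d := -d) hodd)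
  · exact absurd (by rw [← hu]; simp; ring)
      (hζ.int_add_two_mul_toInteger_ne_toInteger_sq_mul_pow_three (c := c) (d := d) hodd)
  · exact absurd (by rw [← hu]; simp; ring)
      (hζ.int_add_two_mul_toInteger_ne_toInteger_sq_mul_pow_three (c := -c) (d := -d) hodd)

end IsPrimitiveRoot

theorem exists_eq_mul_sq_sub_nine_mul_sq_of_sq_add_three_mul_sq_eq_pow_three {p q s : ℤ}
    (hpq : IsCoprime p q) (hodd : Odd (p + q)) (h3 : ¬ 3 ∣ p) (h : p ^ 2 + 3 * q ^ 2 = s ^ 3) :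
    ∃ C D : ℤ, IsCoprime C (3 * D) ∧ Odd (C + D) ∧
      p = C * (C ^ 2 - 9 * D ^ 2) ∧ q = 3 * D * (C ^ 2 - D ^ 2) := by
  have : IsCyclotomicExtension {3} ℚ (CyclotomicField 3 ℚ) :=
    CyclotomicField.isCyclotomicExtension 3 ℚ
  have hζ := IsCyclotomicExtension.zeta_spec 3 ℚ (CyclotomicField 3 ℚ)
  obtain ⟨c, d, hcd⟩ := hζ.exists_int_add_two_mul_toInteger_eq_pow_three hpq hodd h3 h
  obtain ⟨e, f, hef⟩ := hζ.exists_pow_three_eq_int_add_two_mul_toInteger_pow_three c d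
  rw [hef, hζ.int_add_int_mul_toInteger_pow_three, ← Int.cast_two, ← Int.cast_mul] at hcd
  obtain ⟨h1, h2⟩ := hζ.int_add_int_mul_toInteger_inj hcd
  -- `e + 2 f η = (e - f) + f √-3`
  have hq : q = 3 * f * ((e - f) ^ 2 - f ^ 2) :=
    mul_left_cancel₀ two_ne_zero (by linear_combination h2)
  have hp : p = (e - f) * ((e - f) ^ 2 - 9 * f ^ 2) := by linear_combination h1 - hq
  refine ⟨e - f, f, ?_, ?_, hp, hq⟩
  · rw [hp, hq] at hpq
    exact hpq.of_mul_left_left.of_mul_right_left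
  · rw [hp, hq] at hodd
    simp only [← Int.not_even_iff_odd, parity_simps] at hodd ⊢
    tauto

structure IsNontrivialSolution (x y z : ℤ) : Prop where
  isCoprime : IsCoprime x y
  eq : x ^ 3 + y ^ 3 = 2 * z ^ 3
  ne : x ≠ y
  ne_neg : x ≠ -y

theorem exists_isNontrivialSolution_of_mul_eq_pow_three {a b c : ℤ} (hab : IsCoprime a b)
    (hodd : Odd (a + b)) (ha : a ≠ 0) (hb : b ≠ 0) (h : a * ((a - b) * (a + b)) = c ^ 3) :
    ∃ x y z, IsNontrivialSolution x y z ∧ z ^ 3 = a := by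
  have h₁ : IsCoprime a (a - b) := by
    simpa [sub_eq_neg_add] using hab.neg_right.add_mul_left_right 1
  have h₂ : IsCoprime a (a + b) := by
    simpa [add_comm] using hab.add_mul_left_right 1
  have h₃ : IsCoprime (a - b) (a + b) := by
    have h2 : IsCoprime (a - b) 2 := Int.isCoprime_two_right.2 (by
      simpa [sub_eq_add_neg, two_mul, add_assoc] using hodd.sub_even (even_two_mul b))
    have hb' : IsCoprime (a - b) b := by
      simpa [sub_eq_add_neg] using hab.add_mul_left_left (-1)
    simpa [two_mul, add_comm] using (h2.mul_right hb').add_mul_left_right 1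
  obtain ⟨e, he⟩ := Int.eq_pow_of_mul_eq_pow_odd_left (h₁.mul_right h₂) (by decide) h
  obtain ⟨f, hf⟩ := Int.eq_pow_of_mul_eq_pow_odd_left (h₁.symm.mul_right h₃) (by decide)
    (show (a - b) * (a * (a + b)) = c ^ 3 by linear_combination h)
  obtain ⟨g, hg⟩ := Int.eq_pow_of_mul_eq_pow_odd_left (h₂.symm.mul_right h₃.symm) (by decide)
    (show (a + b) * (a * (a - b)) = c ^ 3 by linear_combination h)
  refine ⟨f, g, e, ⟨?_, ?_, ?_, ?_⟩, he.symm⟩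
  · rw [hf, hg] at h₃
    exact IsCoprime.pow_left_iff three_pos |>.1 (IsCoprime.pow_right_iff three_pos |>.1 h₃)
  · linear_combination -hf - hg + 2 * he
  · rintro rfl
    exact hb (by linarith)
  · rintro rfl
    exact ha (by linarith [show (-g) ^ 3 = -g ^ 3 by ring])

theorem natAbs_lt_of_pow_eq_pow_mul {z w k : ℤ} {n : ℕ} (h : z ^ n = w ^ n * k)
    (hw : w ≠ 0) (hk : 1 < |k|) : w.natAbs < z.natAbs := by
  have habs : |z| ^ n = |w| ^ n * |k| := by rw [← abs_pow, h, abs_mul, abs_pow]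
  zify
  refine lt_of_pow_lt_pow_left₀ n (abs_nonneg z) ?_
  rw [habs]
  exact lt_mul_of_one_lt_right (pow_pos (abs_pos.2 hw) n) hk

theorem exists_isNontrivialSolution_natAbs_lt_of_not_three_dvd {p q z : ℤ}
    (hpq : IsCoprime p q) (hodd : Odd (p + q)) (h3 : ¬ 3 ∣ p) (hq : q ≠ 0)
    (h : z ^ 3 = p * (p ^ 2 + 3 * q ^ 2)) :
    ∃ x y w, IsNontrivialSolution x y w ∧ w.natAbs < z.natAbs := by
  have hp : p ≠ 0 := by rintro rfl; exact h3 (dvd_zero 3)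
  have hcop : IsCoprime p (p ^ 2 + 3 * q ^ 2) := by
    have : IsCoprime p (3 * q ^ 2) :=
      ((Int.prime_three.coprime_iff_not_dvd).2 h3).symm.mul_right hpq.pow_right
    simpa [sq, add_comm] using this.add_mul_left_right p
  obtain ⟨⟨r, hr⟩, ⟨s, hs⟩⟩ := Int.eq_pow_of_mul_eq_pow_odd hcop (by decide) h.symm
  obtain ⟨C, D, hCD, hCD_odd, hC, hD⟩ :=
    exists_eq_mul_sq_sub_nine_mul_sq_of_sq_add_three_mul_sq_eq_pow_three hpq hodd h3 hs
  obtain ⟨x, y, w, hsol, hw⟩ := exists_isNontrivialSolution_of_mul_eq_pow_three hCD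
    (by rw [show C + 3 * D = C + D + 2 * D by ring]; exact hCD_odd.add_even (even_two_mul D))
    (by rintro rfl; exact hp (by simpa using hC))
    (mul_ne_zero three_ne_zero (by rintro rfl; exact hq (by simpa using hD)))
    (show C * ((C - 3 * D) * (C + 3 * D)) = r ^ 3 by rw [← hr, hC]; ring)
  refine ⟨x, y, w, hsol, natAbs_lt_of_pow_eq_pow_mul
    (k := (C ^ 2 - 9 * D ^ 2) * (p ^ 2 + 3 * q ^ 2))
    (by rw [h, hw]; linear_combination (p ^ 2 + 3 * q ^ 2) * hC)
    (by rintro rfl; exact hp (by rw [hC, ← hw]; ring)) ?_⟩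
  have h₁ : 1 ≤ |C ^ 2 - 9 * D ^ 2| :=
    Int.one_le_abs (by intro h0; exact hp (by rw [hC, h0, mul_zero]))
  have h₂ : 4 ≤ |p ^ 2 + 3 * q ^ 2| := by
    have : 0 < p ^ 2 := by positivity
    have : 0 < q ^ 2 := by positivity
    rw [abs_of_pos (by positivity)]
    omega
  rw [abs_mul]
  nlinarith

theorem exists_isNontrivialSolution_natAbs_lt_of_three_dvd {p q z : ℤ} (hpq : IsCoprime p q)
    (hodd : Odd (p + q)) (h3 : 3 ∣ p) (hp : p ≠ 0) (h : z ^ 3 = p * (p ^ 2 + 3 * q ^ 2)) :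
    ∃ x y w, IsNontrivialSolution x y w ∧ w.natAbs < z.natAbs := by
  obtain ⟨t, rfl⟩ := h3
  have ht : t ≠ 0 := right_ne_zero_of_mul hp
  have hq3 : ¬ 3 ∣ q := fun hdvd =>
    Int.prime_three.not_isUnit (hpq.isUnit_of_dvd' (dvd_mul_right 3 t) hdvd)
  have hq : q ≠ 0 := by rintro rfl; exact hq3 (dvd_zero 3)
  have hqt : IsCoprime q t := hpq.of_mul_left_right.symm
  have hcop : IsCoprime (9 * t) (q ^ 2 + 3 * t ^ 2) := by
    have ht' : IsCoprime t (q ^ 2 + 3 * t ^ 2) := by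
      rw [show q ^ 2 + 3 * t ^ 2 = q ^ 2 + t * (3 * t) by ring]
      exact hqt.symm.pow_right.add_mul_left_right _
    simpa using ((Int.isCoprime_three_sq_add_three_mul_sq hq3).pow_left (m := 2)).mul_left ht'
  obtain ⟨⟨w, hw⟩, ⟨s, hs⟩⟩ := Int.eq_pow_of_mul_eq_pow_odd hcop (by decide)
    (show 9 * t * (q ^ 2 + 3 * t ^ 2) = z ^ 3 by rw [h]; ring)
  obtain ⟨C, D, hCD, hCD_odd, hC, hD⟩ :=
    exists_eq_mul_sq_sub_nine_mul_sq_of_sq_add_three_mul_sq_eq_pow_three hqt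
      (by rw [show q + t = 3 * t + q - 2 * t by ring]; exact hodd.sub_even (even_two_mul t))
      hq3 hs
  -- `9 t = 27 D (C² - D²)` is a cube, hence so is `D (C² - D²)`
  obtain ⟨v, rfl⟩ : 3 ∣ w := Int.prime_three.dvd_of_dvd_pow (n := 3)
    ⟨9 * D * (C ^ 2 - D ^ 2), by rw [← hw, hD]; ring⟩
  have hv : D * ((D - C) * (D + C)) = (-v) ^ 3 :=
    mul_left_cancel₀ (by norm_num : (27 : ℤ) ≠ 0) (by linear_combination 9 * hD - hw)
  obtain ⟨x, y, w, hsol, hw'⟩ := exists_isNontrivialSolution_of_mul_eq_pow_three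
    hCD.of_mul_right_right.symm (by rwa [add_comm]) (by rintro rfl; exact ht (by simpa using hD))
    (by rintro rfl; exact hq (by simpa using hC)) hv
  refine ⟨x, y, w, hsol, natAbs_lt_of_pow_eq_pow_mul
    (k := 27 * (C ^ 2 - D ^ 2) * (q ^ 2 + 3 * t ^ 2)) (by rw [h, hw', hD]; ring)
    (by rintro rfl; exact ht (by rw [hD, ← hw']; ring)) ?_⟩
  have h₁ : 1 ≤ |C ^ 2 - D ^ 2| :=
    Int.one_le_abs (by intro h0; exact ht (by rw [hD, h0, mul_zero]))
  have h₂ : 1 ≤ |q ^ 2 + 3 * t ^ 2| := by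
    have : 0 < q ^ 2 := by positivity
    rw [abs_of_pos (by positivity)]
    nlinarith [sq_nonneg t]
  rw [abs_mul, abs_mul]
  norm_num
  nlinarith

theorem IsNontrivialSolution.exists_natAbs_lt {x y z : ℤ} (hs : IsNontrivialSolution x y z) :
    ∃ x' y' z', IsNontrivialSolution x' y' z' ∧ z'.natAbs < z.natAbs := by
  obtain ⟨hxy, h, hne, hne_neg⟩ := hs
  have hsum : Even (x + y) := by
    simpa [parity_simps] using (h ▸ even_two_mul (z ^ 3) : Even (x ^ 3 + y ^ 3))
  have hx : Odd x := by
    rw [← Int.not_even_iff_odd]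
    intro hx
    have hy : Even y := by simpa [hx, parity_simps] using hsum
    exact Int.prime_two.not_isUnit (hxy.isUnit_of_dvd' hx.two_dvd hy.two_dvd)
  obtain ⟨p, q, rfl, rfl⟩ : ∃ p q, x = p + q ∧ y = p - q := by
    obtain ⟨p, hp⟩ := hsum
    exact ⟨p, x - p, by ring, by omega⟩
  have hpq : IsCoprime p q := by
    obtain ⟨u, v, huv⟩ := hxy
    exact ⟨u + v, u - v, by linear_combination huv⟩
  have hz : z ^ 3 = p * (p ^ 2 + 3 * q ^ 2) :=
    mul_left_cancel₀ two_ne_zero (by linear_combination -h)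
  by_cases h3 : 3 ∣ p
  · exact exists_isNontrivialSolution_natAbs_lt_of_three_dvd hpq hx h3
      (by rintro rfl; exact hne_neg (by ring)) hz
  · exact exists_isNontrivialSolution_natAbs_lt_of_not_three_dvd hpq hx h3
      (by rintro rfl; exact hne (by ring)) hz

theorem not_isNontrivialSolution (x y z : ℤ) : ¬ IsNontrivialSolution x y z := by
  induction hz : z.natAbs using Nat.strong_induction_on generalizing x y z with
  | _ n ih =>
    intro hs
    obtain ⟨x', y', z', hs', hlt⟩ := hs.exists_natAbs_lt
    exact ih _ (hz ▸ hlt) x' y' z' rfl hs'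

theorem unique_solution_two_cubes_general (x y : ℤ) (hy : 0 < y)
    (h : 2 * x ^ 3 - y ^ 3 = 1) : x = 1 ∧ y = 1 := by
  obtain rfl : y = 1 := by
    by_contra hne
    exact not_isNontrivialSolution 1 y x
      ⟨isCoprime_one_left, by linear_combination -h, Ne.symm hne, by omega⟩
  exact ⟨(Odd.pow_inj (by decide)).1 (by linarith : x ^ 3 = 1 ^ 3), rfl⟩

/-- The unique solution in positive integers of the Diophantine equation
`2 * x ^ 3 - y ^ 3 = 1` is `(x, y) = (1, 1)`. -/
theorem unique_solution_two_cubes (x y : ℤ) (hx : 0 < x) (hy : 0 < y)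
    (h : 2 * x ^ 3 - y ^ 3 = 1) : x = 1 ∧ y = 1 :=
  unique_solution_two_cubes_general x y hy h
end

section
/- The set {1, 2, 13} is a nonextendible P^3_1-set: there is no positive integer d not in {1, 2, 13} such that {1, 2, 13, d} is a P^3_1-set, i.e., such that the product of any three distinct elements of {1, 2, 13, d} increased by one is a perfect cube. -/
/-!
The triples `{1, 13, d}` and `{2, 13, d}` give `13 d + 1 = b³` and `26 d + 1 = c³`, hence
`c³ + 1³ = 2 b³`. By Euler's descent, `x³ + y³ = 2 z³` with `x, y` coprime and `z ≠ 0`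
forces `x = y`; so `c = 1` and `d = 0`.

In the descent, `x + y` and `x² - x y + y²` are coprime cubes up to the factors `2` and `3`.
As `ℤ[ω]` is Euclidean, `a² - a b + b² = t³` (with `a, b` coprime, `a` odd, `b` even and
`3 ∤ t`) makes `a + b ω` a cube `(m + n ω)³`. Then `x + y` becomes `2 w³` written as a
product of three pairwise coprime linear forms `P`, `Q`, `P + Q` in `m, n`; these are
`2 e³`, `f³`, `g³` in some order, and the linear relation between them is a new solution
with `|e| < |z|`.
-/

theorem exists_abs_two_mul_sub_mul_le (p : ℤ) {N : ℤ} (hN : 0 < N) :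
    ∃ r, |2 * (p - N * r)| ≤ N := by
  refine ⟨(2 * p + N) / (2 * N), abs_le.mpr ⟨?_, ?_⟩⟩ <;>
  · have := Int.emod_add_mul_ediv (2 * p + N) (2 * N)
    have := Int.emod_nonneg (2 * p + N) (by omega : 2 * N ≠ 0)
    have := Int.emod_lt_of_pos (2 * p + N) (by omega : 0 < 2 * N)
    linarith

theorem IsCoprime.of_mul_sq_sub {R : Type*} [CommRing R] {x y : R}
    (h : IsCoprime (x * y) ((x - y) ^ 2)) : IsCoprime x y := by
  have h' : IsCoprime x (y ^ 2 + x * (x - 2 * y)) := by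
    convert h.of_mul_left_left using 1; ring
  exact (IsCoprime.pow_right_iff two_pos).mp h'.of_add_mul_left_right

theorem isCoprime_cube_three_mul_sq {a b t : ℤ} (h : a ^ 2 - a * b + b ^ 2 = t ^ 3)
    (hab : IsCoprime a b) (ht : ¬ 3 ∣ t) : IsCoprime (t ^ 3) (3 * b ^ 2) := by
  have hb : IsCoprime (t ^ 3) b := by
    rw [← h, show a ^ 2 - a * b + b ^ 2 = a ^ 2 + b * (b - a) by ring]
    exact hab.pow_left.add_mul_left_left _
  have h3 : IsCoprime (t ^ 3) 3 :=
    (Int.prime_three.coprime_iff_not_dvd.mpr fun h3 => ht (Int.prime_three.dvd_of_dvd_pow h3)).symm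
  exact h3.mul_right hb.pow_right

/-- `ω ^ 2 = -1 - ω`: `ω` is a primitive cube root of unity. -/
abbrev EisensteinInt : Type := QuadraticAlgebra ℤ (-1) (-1)

notation "ℤ[ω]" => EisensteinInt

namespace EisensteinInt

open QuadraticAlgebra

theorem four_mul_norm (z : ℤ[ω]) : 4 * z.norm = (2 * z.re - z.im) ^ 2 + 3 * z.im ^ 2 := by
  rw [norm_def]; ring

theorem norm_nonneg (z : ℤ[ω]) : 0 ≤ z.norm := by
  nlinarith [four_mul_norm z, sq_nonneg (2 * z.re - z.im), sq_nonneg z.im]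

theorem norm_pos {z : ℤ[ω]} (hz : z ≠ 0) : 0 < z.norm := by
  refine (norm_nonneg z).lt_of_ne fun h => hz ?_
  have h4 := four_mul_norm z
  have him : z.im = 0 := by nlinarith [sq_nonneg (2 * z.re - z.im), sq_nonneg z.im]
  have hre : z.re = 0 := by nlinarith [sq_nonneg (2 * z.re - z.im)]
  exact QuadraticAlgebra.ext hre him

/-- Rounding the coordinates of `x * star y / y.norm` leaves a remainder whose norm is at most
`3 / 4` of `y.norm`. -/
theorem exists_norm_sub_mul_lt (x : ℤ[ω]) {y : ℤ[ω]} (hy : y ≠ 0) :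
    ∃ q, (x - y * q).norm < y.norm := by
  have hN := norm_pos hy
  obtain ⟨r, hr⟩ := exists_abs_two_mul_sub_mul_le (x * star y).re hN
  obtain ⟨s, hs⟩ := exists_abs_two_mul_sub_mul_le (x * star y).im hN
  refine ⟨⟨r, s⟩, ?_⟩
  set u := (x * star y).re - y.norm * r
  set v := (x * star y).im - y.norm * s
  have key : (x - y * ⟨r, s⟩).norm * y.norm = u ^ 2 - u * v + v ^ 2 := by
    have hc : (x - y * ⟨r, s⟩) * star y = ⟨u, v⟩ := by
      rw [sub_mul, mul_right_comm, ← algebraMap_norm_eq_mul_star]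
      ext <;> simp [u, v]
    rw [← norm_star y, ← map_mul, hc, norm_def]
    ring
  rw [abs_le] at hr hs
  nlinarith

noncomputable instance : EuclideanDomain ℤ[ω] where
  quotient x y := if hy : y = 0 then 0 else (exists_norm_sub_mul_lt x hy).choose
  quotient_zero x := dif_pos rfl
  remainder x y := x - y * if hy : y = 0 then 0 else (exists_norm_sub_mul_lt x hy).choose
  quotient_mul_add_remainder_eq x y := add_sub_cancel _ _
  r := InvImage (· < ·) fun z => z.norm.natAbs
  r_wellFounded := (measure _).wf
  remainder_lt x y hy := by
    have := (exists_norm_sub_mul_lt x hy).choose_spec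
    have := norm_nonneg (x - y * (exists_norm_sub_mul_lt x hy).choose)
    simp only [InvImage, dif_neg hy]
    omega
  mul_left_not_lt x y hy := by
    have := norm_pos hy
    have := norm_nonneg x
    simp only [InvImage, map_mul, not_lt]
    rw [Int.natAbs_mul]
    exact Nat.le_mul_of_pos_right _ (by omega)

theorem eq_one_or_eq_neg_one_of_isUnit {u : ℤ[ω]} (hu : IsUnit u) (him : Even u.im) :
    u = 1 ∨ u = -1 := by
  have hnorm : u.norm = 1 := by
    rcases Int.isUnit_iff.mp (isUnit_iff_norm_isUnit.mp hu) with h | h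
    · exact h
    · linarith [norm_nonneg u]
  have h4 := four_mul_norm u
  have him0 : u.im = 0 := by
    obtain ⟨k, hk⟩ := him
    rw [hnorm, hk] at h4
    have : k ^ 2 < 1 := by nlinarith [sq_nonneg (2 * u.re - (k + k))]
    nlinarith [sq_nonneg k]
  have hre : (u.re - 1) * (u.re + 1) = 0 := by
    rw [hnorm, him0] at h4
    linarith
  rcases mul_eq_zero.mp hre with h | h
  · exact .inl (QuadraticAlgebra.ext (by rw [re_one]; linarith) (by rw [im_one, him0]))
  · exact .inr (QuadraticAlgebra.ext (by rw [re_neg, re_one]; linarith)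
      (by rw [im_neg, im_one, him0, neg_zero]))

theorem re_pow_three (d : ℤ[ω]) : (d ^ 3).re = d.re ^ 3 - 3 * d.re * d.im ^ 2 + d.im ^ 3 := by
  simp only [pow_succ, pow_zero, one_mul, re_mul, im_mul]
  ring

theorem im_pow_three (d : ℤ[ω]) : (d ^ 3).im = 3 * d.re ^ 2 * d.im - 3 * d.re * d.im ^ 2 := by
  simp only [pow_succ, pow_zero, one_mul, re_mul, im_mul]
  ring

theorem even_im_pow_three (d : ℤ[ω]) : Even (d ^ 3).im := by
  rw [im_pow_three, show 3 * d.re ^ 2 * d.im - 3 * d.re * d.im ^ 2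
    = 3 * (d.re * d.im * (d.re - d.im)) by ring]
  simp only [Int.even_mul, Int.even_sub]
  tauto

/-- `z` and `star z` are coprime because `z * star z = t³` and `(z - star z)² = -3 (z.im)²`. -/
theorem exists_eq_pow_three_of_norm_eq_pow_three {z : ℤ[ω]} {t : ℤ} (h : z.norm = t ^ 3)
    (hre : Odd z.re) (him : Even z.im) (hco : IsCoprime z.re z.im) (ht : ¬ 3 ∣ t) :
    ∃ d : ℤ[ω], z = d ^ 3 := by
  have hmul : z * star z = ((t ^ 3 : ℤ) : ℤ[ω]) := by
    rw [← algebraMap_norm_eq_mul_star, h, algebraMap_int_eq, eq_intCast]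
  have hsub : (z - star z) ^ 2 = ((-3 * z.im ^ 2 : ℤ) : ℤ[ω]) := by
    ext <;> simp only [pow_two, re_mul, im_mul, re_sub, im_sub, re_star, im_star, re_intCast,
      im_intCast] <;> push_cast <;> ring
  have hcop : IsCoprime z (star z) := by
    apply IsCoprime.of_mul_sq_sub
    rw [hmul, hsub, neg_mul]
    refine IsCoprime.intCast (IsCoprime.neg_right ?_)
    refine isCoprime_cube_three_mul_sq ?_ hco ht
    rw [← h, norm_def]; ring
  obtain ⟨d, u, hu⟩ := exists_associated_pow_of_mul_eq_pow' hcop (by rw [hmul]; push_cast; rfl)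
  -- parity rules out the units `±ω` and `±ω²`
  have hu_im : Even (u : ℤ[ω]).im := by
    have hB := even_im_pow_three d
    rw [← hu] at hre him
    simp only [re_mul, im_mul] at hre him
    simp only [parity_simps, ← Int.not_even_iff_odd] at hre him hB
    tauto
  rcases eq_one_or_eq_neg_one_of_isUnit u.isUnit hu_im with h1 | h1
  · exact ⟨d, by rw [← hu, h1, mul_one]⟩
  · exact ⟨-d, by rw [← hu, h1]; ring⟩

end EisensteinInt

theorem exists_cubic_forms_of_sq_sub_mul_add_sq_eq_cube {a b t : ℤ}
    (h : a ^ 2 - a * b + b ^ 2 = t ^ 3) (ha : Odd a) (hb : Even b) (hab : IsCoprime a b)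
    (ht : ¬ 3 ∣ t) :
    ∃ m n : ℤ, a = m ^ 3 - 3 * m * n ^ 2 + n ^ 3 ∧ b = 3 * m ^ 2 * n - 3 * m * n ^ 2 := by
  obtain ⟨d, hd⟩ := EisensteinInt.exists_eq_pow_three_of_norm_eq_pow_three (z := ⟨a, b⟩)
    (by rw [QuadraticAlgebra.norm_def, ← h]; ring) ha hb hab ht
  refine ⟨d.re, d.im, ?_, ?_⟩
  · rw [← EisensteinInt.re_pow_three, ← hd]
  · rw [← EisensteinInt.im_pow_three, ← hd]

theorem IsCoprime.of_cubic_forms {m n : ℤ}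
    (h : IsCoprime (m ^ 3 - 3 * m * n ^ 2 + n ^ 3) (3 * m ^ 2 * n - 3 * m * n ^ 2)) :
    IsCoprime m n := by
  obtain ⟨u, v, huv⟩ := h
  exact ⟨u * (m ^ 2 - 3 * n ^ 2) + v * (3 * m * n - 3 * n ^ 2), u * n ^ 2, by
    linear_combination huv⟩

theorem IsCoprime.isCoprime_add_mul {R : Type*} [CommRing R] {x y : R} (h : IsCoprime x y) :
    IsCoprime (x + y) (x * y) := by
  refine IsCoprime.mul_right ?_ ?_
  · simpa [add_comm] using h.symm.add_mul_left_left 1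
  · simpa using h.add_mul_left_left 1

theorem isCoprime_add_sq_sub_mul_add_sq {x y : ℤ} (hxy : IsCoprime x y) (h3 : ¬ 3 ∣ x + y) :
    IsCoprime (x + y) (x ^ 2 - x * y + y ^ 2) := by
  have h3' : IsCoprime (x + y) 3 := (Int.prime_three.coprime_iff_not_dvd.mpr h3).symm
  rw [show x ^ 2 - x * y + y ^ 2 = -(3 * (x * y)) + (x + y) * (x + y) by ring]
  exact ((h3'.mul_right hxy.isCoprime_add_mul).neg_right).add_mul_left_right (x + y)

theorem isCoprime_add_sub_two_mul {m n : ℤ} (hmn : IsCoprime m n) (h3 : ¬ 3 ∣ m + n) :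
    IsCoprime (m + n) (m - 2 * n) := by
  have h3' : IsCoprime (m + n) 3 := (Int.prime_three.coprime_iff_not_dvd.mpr h3).symm
  have hn : IsCoprime (m + n) n := hmn.add_mul_left_left 1 |>.of_isCoprime_of_dvd_left (by simp)
  rw [show m - 2 * n = -(3 * n) + (m + n) * 1 by ring]
  exact ((h3'.mul_right hn).neg_right).add_mul_left_right 1

theorem three_dvd_add_of_three_dvd_cube_add_cube {x y : ℤ} (h : 3 ∣ x ^ 3 + y ^ 3) :
    3 ∣ x + y := by
  have key : ∀ a b : ZMod 3, a ^ 3 + b ^ 3 = 0 → a + b = 0 := by decide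
  have h' := (ZMod.intCast_zmod_eq_zero_iff_dvd (x ^ 3 + y ^ 3) 3).mpr (by exact_mod_cast h)
  push_cast at h'
  exact_mod_cast (ZMod.intCast_zmod_eq_zero_iff_dvd (x + y) 3).mp (by push_cast; exact key _ _ h')

theorem three_le_sq_sub_mul_add_sq {x y : ℤ} (hx : Odd x) (hy : Odd y) (hne : x ≠ y) :
    3 ≤ x ^ 2 - x * y + y ^ 2 := by
  obtain ⟨r, hr⟩ := hx.sub_odd hy
  have hr0 : r ≠ 0 := by rintro rfl; exact hne (by linarith)
  have : 0 < r ^ 2 := by positivity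
  have h4 : 4 * (x ^ 2 - x * y + y ^ 2) = (x + y) ^ 2 + 12 * r ^ 2 := by
    rw [show x = y + (r + r) by linarith]; ring
  nlinarith [sq_nonneg (x + y)]

theorem exists_eq_two_mul_cube_cube_cube {a b c w : ℤ} (hab : IsCoprime a b)
    (hac : IsCoprime a c) (hbc : IsCoprime b c) (h : a * b * c = 2 * w ^ 3) (ha : Even a) :
    ∃ e f g, a = 2 * e ^ 3 ∧ b = f ^ 3 ∧ c = g ^ 3 ∧ e ∣ w := by
  obtain ⟨a', rfl⟩ := ha
  have h' : a' * (b * c) = w ^ 3 := by linarith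
  have hco : IsCoprime a' (b * c) :=
    (hab.mul_right hac).of_isCoprime_of_dvd_left ⟨2, by ring⟩
  obtain ⟨e, he⟩ := Int.eq_pow_of_mul_eq_pow_odd_left hco (by decide) h'
  obtain ⟨d, hd⟩ := Int.eq_pow_of_mul_eq_pow_odd_right hco (by decide) h'
  obtain ⟨f, hf⟩ := Int.eq_pow_of_mul_eq_pow_odd_left hbc (by decide) hd
  obtain ⟨g, hg⟩ := Int.eq_pow_of_mul_eq_pow_odd_right hbc (by decide) hd
  refine ⟨e, f, g, by rw [he]; ring, hf, hg, ?_⟩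
  exact (Int.pow_dvd_pow_iff three_ne_zero).mp ⟨b * c, by rw [← he, h']⟩

theorem not_three_dvd_of_dvd_two_mul_cube {k z : ℤ} (h3 : ¬ 3 ∣ z) (hk : k ∣ 2 * z ^ 3) :
    ¬ 3 ∣ k := fun h3k => h3 <| Int.prime_three.dvd_of_dvd_pow <|
  (Int.prime_three.dvd_mul.mp (h3k.trans hk)).resolve_left (by norm_num)

def IsNontrivialPrimitiveSolution (x y z : ℤ) : Prop :=
  x ^ 3 + y ^ 3 = 2 * z ^ 3 ∧ IsCoprime x y ∧ z ≠ 0 ∧ x ≠ y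

theorem exists_of_mul_mul_add_eq_two_mul_cube_of_even_left {P Q w : ℤ} (hPQ : IsCoprime P Q)
    (h : P * Q * (P + Q) = 2 * w ^ 3) (hw : w ≠ 0) (hP : Even P) (hne : P + 2 * Q ≠ 0) :
    ∃ f g e, IsNontrivialPrimitiveSolution f g e ∧ e.natAbs ≤ w.natAbs := by
  have hPR : IsCoprime P (P + Q) := by simpa [add_comm] using hPQ.add_mul_left_right 1
  have hQR : IsCoprime Q (P + Q) := by simpa using hPQ.symm.add_mul_left_right 1
  obtain ⟨e, f, g, hPe, hQf, hRg, hew⟩ := exists_eq_two_mul_cube_cube_cube hPQ hPR hQR h hP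
  have he : e ≠ 0 := by
    rintro rfl
    exact hw (by simpa [hPe] using h.symm)
  refine ⟨g, -f, e, ⟨by linear_combination hPe + hQf - hRg, ?_, he, ?_⟩,
    Int.natAbs_le_of_dvd_ne_zero hew hw⟩
  · rw [IsCoprime.neg_right_iff, ← IsCoprime.pow_iff three_pos three_pos, ← hRg, ← hQf]
    exact hQR.symm
  · rintro rfl
    exact hne (by linear_combination hRg + hQf)

theorem exists_of_mul_mul_add_eq_two_mul_cube_of_even_add {P Q w : ℤ} (hPQ : IsCoprime P Q)
    (h : P * Q * (P + Q) = 2 * w ^ 3) (hw : w ≠ 0) (hPQe : Even (P + Q)) (hne : P ≠ Q) :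
    ∃ f g e, IsNontrivialPrimitiveSolution f g e ∧ e.natAbs ≤ w.natAbs := by
  have hPR : IsCoprime (P + Q) P := by simpa [add_comm] using (hPQ.add_mul_left_right 1).symm
  have hQR : IsCoprime (P + Q) Q := by simpa using (hPQ.symm.add_mul_left_right 1).symm
  obtain ⟨e, f, g, hRe, hPf, hQg, hew⟩ :=
    exists_eq_two_mul_cube_cube_cube (w := w) hPR hQR hPQ (by linear_combination h) hPQe
  have he : e ≠ 0 := by
    rintro rfl
    exact hw (by simpa [hRe] using h.symm)
  refine ⟨f, g, e, ⟨by linear_combination hRe - hPf - hQg, ?_, he, ?_⟩,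
    Int.natAbs_le_of_dvd_ne_zero hew hw⟩
  · rwa [← IsCoprime.pow_iff three_pos three_pos, ← hPf, ← hQg]
  · rintro rfl
    exact hne (hPf.trans hQg.symm)

theorem exists_of_mul_mul_add_eq_two_mul_cube {P Q w : ℤ} (hPQ : IsCoprime P Q)
    (h : P * Q * (P + Q) = 2 * w ^ 3) (hw : w ≠ 0)
    (hne : (P - Q) * (P + 2 * Q) * (2 * P + Q) ≠ 0) :
    ∃ f g e, IsNontrivialPrimitiveSolution f g e ∧ e.natAbs ≤ w.natAbs := by
  simp only [mul_ne_zero_iff, sub_ne_zero] at hne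
  obtain ⟨⟨hPQne, hP2Q⟩, h2PQ⟩ := hne
  rcases Int.even_or_odd P with hP | hP
  · exact exists_of_mul_mul_add_eq_two_mul_cube_of_even_left hPQ h hw hP hP2Q
  rcases Int.even_or_odd Q with hQ | hQ
  · exact exists_of_mul_mul_add_eq_two_mul_cube_of_even_left hPQ.symm
      (by linear_combination h) hw hQ (by rwa [add_comm])
  · exact exists_of_mul_mul_add_eq_two_mul_cube_of_even_add hPQ h hw (hP.add_odd hQ) hPQne

namespace IsNontrivialPrimitiveSolution

variable {x y z : ℤ}

theorem odd_left_and_odd_right (hs : IsNontrivialPrimitiveSolution x y z) : Odd x ∧ Odd y := by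
  obtain ⟨h, hxy, -, -⟩ := hs
  have hpar : Even (x ^ 3 + y ^ 3) := ⟨z ^ 3, by rw [h]; ring⟩
  have hnot : ¬ (Even x ∧ Even y) := fun ⟨hx, hy⟩ => by
    simpa [Int.isUnit_iff] using hxy.isUnit_of_dvd' hx.two_dvd hy.two_dvd
  simp only [parity_simps, ← Int.not_even_iff_odd] at hpar ⊢
  tauto

theorem add_mul_eq (hs : IsNontrivialPrimitiveSolution x y z) :
    (x + y) * (x ^ 2 - x * y + y ^ 2) = 2 * z ^ 3 := by
  linear_combination hs.1

theorem add_ne_zero (hs : IsNontrivialPrimitiveSolution x y z) : x + y ≠ 0 := fun h0 => by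
  have := hs.add_mul_eq
  rw [h0, zero_mul, eq_comm] at this
  simp [hs.2.2.1] at this

theorem not_three_dvd_add (hs : IsNontrivialPrimitiveSolution x y z) (h3 : ¬ 3 ∣ z) :
    ¬ 3 ∣ x + y :=
  not_three_dvd_of_dvd_two_mul_cube h3 ⟨_, hs.add_mul_eq.symm⟩

theorem exists_add_eq_two_mul_cube (hs : IsNontrivialPrimitiveSolution x y z) (h3 : ¬ 3 ∣ z) :
    ∃ w t, x + y = 2 * w ^ 3 ∧ x ^ 2 - x * y + y ^ 2 = t ^ 3 ∧ ¬ 3 ∣ t ∧ w ≠ 0 ∧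
      w.natAbs < z.natAbs := by
  obtain ⟨hx, hy⟩ := hs.odd_left_and_odd_right
  have hfac := hs.add_mul_eq
  have h3s := hs.not_three_dvd_add h3
  obtain ⟨-, hxy, hz, hne⟩ := hs
  obtain ⟨s, hs2⟩ := hx.add_odd hy
  have hcop : IsCoprime s (x ^ 2 - x * y + y ^ 2) :=
    (isCoprime_add_sq_sub_mul_add_sq hxy h3s).of_isCoprime_of_dvd_left ⟨2, by rw [hs2]; ring⟩
  have hsN : s * (x ^ 2 - x * y + y ^ 2) = z ^ 3 :=
    mul_left_cancel₀ two_ne_zero (by rw [← hfac, hs2]; ring)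
  obtain ⟨w, hw⟩ := Int.eq_pow_of_mul_eq_pow_odd_left hcop (by decide) hsN
  obtain ⟨t, ht⟩ := Int.eq_pow_of_mul_eq_pow_odd_right hcop (by decide) hsN
  have ht2 : 2 ≤ t := by
    have := ht ▸ three_le_sq_sub_mul_add_sq hx hy hne
    by_contra! ht2
    nlinarith [sq_nonneg t, sq_nonneg (t + 1)]
  have hzwt : z = w * t := (Odd.strictMono_pow (R := ℤ) ⟨1, rfl⟩).injective <| by
    show z ^ 3 = (w * t) ^ 3
    rw [← hsN, hw, ht]; ring
  have hw0 : w ≠ 0 := by rintro rfl; exact hz (by simp [hzwt])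
  have ht3 : ¬ 3 ∣ t := fun h3t => not_three_dvd_of_dvd_two_mul_cube h3
    ⟨x + y, by rw [← hfac]; ring⟩ (ht ▸ dvd_pow h3t three_ne_zero)
  refine ⟨w, t, by rw [hs2, hw]; ring, ht, ht3, hw0, ?_⟩
  rw [hzwt, Int.natAbs_mul]
  have : 0 < w.natAbs := Int.natAbs_pos.mpr hw0
  have : 2 ≤ t.natAbs := by omega
  nlinarith

theorem exists_natAbs_lt_of_not_three_dvd (hs : IsNontrivialPrimitiveSolution x y z)
    (h3 : ¬ 3 ∣ z) :
    ∃ x' y' z', IsNontrivialPrimitiveSolution x' y' z' ∧ z'.natAbs < z.natAbs := by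
  obtain ⟨hx, hy⟩ := hs.odd_left_and_odd_right
  have h3s := hs.not_three_dvd_add h3
  obtain ⟨w, t, hw, ht, ht3, hw0, hwz⟩ := hs.exists_add_eq_two_mul_cube h3
  obtain ⟨-, hxy, -, hne⟩ := hs
  -- `-y + (x - y) ω` has norm `x² - x y + y²`, and `x + y = -(m + n) (m - 2 n) (2 m - n)`
  have hab : IsCoprime (-y) (x - y) := by
    simpa [sub_eq_add_neg] using hxy.symm.neg_left.add_mul_left_right 1
  obtain ⟨m, n, hA, hB⟩ := exists_cubic_forms_of_sq_sub_mul_add_sq_eq_cube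
    (by rw [← ht]; ring) hy.neg (hx.sub_odd hy) hab ht3
  have hmn : IsCoprime m n := IsCoprime.of_cubic_forms (hA ▸ hB ▸ hab)
  have hPQ : IsCoprime (m + n) (m - 2 * n) := isCoprime_add_sub_two_mul hmn fun h3mn =>
    h3s (h3mn.trans ⟨-((m - 2 * n) * (2 * m - n)), by linear_combination hB - 2 * hA⟩)
  obtain ⟨f, g, e, hsol, he⟩ := exists_of_mul_mul_add_eq_two_mul_cube hPQ (w := -w)
    (by linear_combination -2 * hA + hB - hw) (neg_ne_zero.mpr hw0) <| by
      rw [show (m + n - (m - 2 * n)) * (m + n + 2 * (m - 2 * n)) * (2 * (m + n) + (m - 2 * n))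
        = 9 * (x - y) by linear_combination -9 * hB]
      simpa [sub_eq_zero] using hne
  exact ⟨f, g, e, hsol, (Int.natAbs_neg w ▸ he).trans_lt hwz⟩

theorem three_dvd_add (hs : IsNontrivialPrimitiveSolution x y z) (h3 : 3 ∣ z) : 3 ∣ x + y :=
  three_dvd_add_of_three_dvd_cube_add_cube <| hs.1 ▸ (dvd_pow h3 three_ne_zero).mul_left 2

theorem not_three_dvd_mul (hs : IsNontrivialPrimitiveSolution x y z) (h3 : 3 ∣ z) :
    ¬ 3 ∣ x * y := fun h3xy => Int.prime_three.not_isUnit <|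
  hs.2.1.isCoprime_add_mul.isUnit_of_dvd' (hs.three_dvd_add h3) h3xy

theorem eighteen_dvd_add (hs : IsNontrivialPrimitiveSolution x y z) (h3 : 3 ∣ z) :
    18 ∣ x + y := by
  obtain ⟨hx, hy⟩ := hs.odd_left_and_odd_right
  have h3xy := hs.not_three_dvd_mul h3
  obtain ⟨s, hs3⟩ := hs.three_dvd_add h3
  obtain ⟨z₁, rfl⟩ := h3
  have hsk : s * (3 * s ^ 2 - x * y) = 3 * (2 * z₁ ^ 3) :=
    mul_left_cancel₀ (by norm_num : (9 : ℤ) ≠ 0) (by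
      linear_combination hs.add_mul_eq -
        (9 * s ^ 2 + 3 * s * (x + y) + (x + y) ^ 2 - 3 * x * y) * hs3)
  have h3s : 3 ∣ s := (Int.prime_three.dvd_mul.mp ⟨_, hsk⟩).resolve_right fun h3k =>
    h3xy ((dvd_mul_right 3 (s ^ 2)).sub h3k |>.trans ⟨1, by ring⟩)
  obtain ⟨r, hr⟩ := hx.add_odd hy
  omega

theorem exists_add_eq_eighteen_mul_cube (hs : IsNontrivialPrimitiveSolution x y z)
    (h3 : 3 ∣ z) :
    ∃ w t, x + y = 18 * w ^ 3 ∧ x ^ 2 - x * y + y ^ 2 = 3 * t ^ 3 ∧ ¬ 3 ∣ t ∧ w ≠ 0 ∧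
      w.natAbs < z.natAbs := by
  have h3xy := hs.not_three_dvd_mul h3
  obtain ⟨h, hh⟩ := hs.eighteen_dvd_add h3
  have hsum := hs.add_ne_zero
  have hfac := hs.add_mul_eq
  obtain ⟨-, hxy, hz, -⟩ := hs
  obtain ⟨z₁, rfl⟩ := h3
  have hk : h * (108 * h ^ 2 - x * y) = z₁ ^ 3 :=
    mul_left_cancel₀ (by norm_num : (54 : ℤ) ≠ 0) (by
      linear_combination hfac - (x ^ 2 - x * y + y ^ 2 + 18 * h * (x + y) + 324 * h ^ 2) * hh)
  have hcop : IsCoprime h (108 * h ^ 2 - x * y) := by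
    rw [show 108 * h ^ 2 - x * y = -(x * y) + h * (108 * h) by ring]
    exact (hxy.isCoprime_add_mul.of_isCoprime_of_dvd_left ⟨18, by rw [hh]; ring⟩).neg_right
      |>.add_mul_left_right _
  obtain ⟨w, hw⟩ := Int.eq_pow_of_mul_eq_pow_odd_left hcop (by decide) hk
  obtain ⟨t, ht⟩ := Int.eq_pow_of_mul_eq_pow_odd_right hcop (by decide) hk
  have hw0 : w ≠ 0 := by rintro rfl; exact hsum (by rw [hh, hw]; ring)
  have hz₁ : z₁ ≠ 0 := by rintro rfl; simp at hz
  refine ⟨w, t, by rw [hh, hw], by linear_combination 3 * ht + (x + y + 18 * h) * hh,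
    fun h3t => h3xy ?_, hw0, ?_⟩
  · rw [show x * y = 3 * (36 * h ^ 2) - t ^ 3 by rw [← ht]; ring]
    exact (dvd_mul_right 3 _).sub (dvd_pow h3t three_ne_zero)
  · have hwz : w ∣ z₁ :=
      (Int.pow_dvd_pow_iff three_ne_zero).mp ⟨t ^ 3, by rw [← hw, ← ht, hk]⟩
    have := Int.natAbs_le_of_dvd_ne_zero hwz hz₁
    have : 0 < z₁.natAbs := Int.natAbs_pos.mpr hz₁
    simp only [Int.natAbs_mul, Int.reduceAbs]
    omega

theorem exists_natAbs_lt_of_three_dvd (hs : IsNontrivialPrimitiveSolution x y z) (h3 : 3 ∣ z) :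
    ∃ x' y' z', IsNontrivialPrimitiveSolution x' y' z' ∧ z'.natAbs < z.natAbs := by
  obtain ⟨hx, hy⟩ := hs.odd_left_and_odd_right
  obtain ⟨w, t, hw, ht, ht3, hw0, hwz⟩ := hs.exists_add_eq_eighteen_mul_cube h3
  obtain ⟨-, hxy, -, hne⟩ := hs
  -- `(x - 6 w³) + 6 w³ ω` has norm `t³`, and `6 w³ = 3 m n (m - n)`
  have hab : IsCoprime (x - 6 * w ^ 3) (6 * w ^ 3) := by
    obtain ⟨u, v, huv⟩ := hxy
    exact ⟨u - v, u + 2 * v, by linear_combination huv - v * hw⟩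
  obtain ⟨m, n, hA, hB⟩ := exists_cubic_forms_of_sq_sub_mul_add_sq_eq_cube
    (mul_left_cancel₀ (by norm_num : (3 : ℤ) ≠ 0)
      (by linear_combination ht + (2 * x - y - 18 * w ^ 3) * hw))
    (hx.sub_even ⟨3 * w ^ 3, by ring⟩) ⟨3 * w ^ 3, by ring⟩ hab ht3
  have hmn : IsCoprime m n := IsCoprime.of_cubic_forms (hA ▸ hB ▸ hab)
  obtain ⟨f, g, e, hsol, he⟩ := exists_of_mul_mul_add_eq_two_mul_cube (P := n) (Q := m - n)
    (w := w) (by simpa [sub_eq_add_neg] using hmn.symm.add_mul_left_right (-1))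
    (mul_left_cancel₀ (by norm_num : (3 : ℤ) ≠ 0) (by linear_combination -hB)) hw0 <| by
      rw [show (n - (m - n)) * (n + 2 * (m - n)) * (2 * n + (m - n)) = y - x by
        linear_combination 2 * hA - hB - hw]
      simpa [sub_eq_zero] using hne.symm
  exact ⟨f, g, e, hsol, he.trans_lt hwz⟩

theorem exists_natAbs_lt (hs : IsNontrivialPrimitiveSolution x y z) :
    ∃ x' y' z', IsNontrivialPrimitiveSolution x' y' z' ∧ z'.natAbs < z.natAbs := by
  by_cases h3 : 3 ∣ z
  exacts [hs.exists_natAbs_lt_of_three_dvd h3, hs.exists_natAbs_lt_of_not_three_dvd h3]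

end IsNontrivialPrimitiveSolution

theorem not_isNontrivialPrimitiveSolution (x y z : ℤ) :
    ¬ IsNontrivialPrimitiveSolution x y z := by
  induction hN : z.natAbs using Nat.strong_induction_on generalizing x y z with
  | _ N ih =>
    intro hs
    obtain ⟨x', y', z', hs', hlt⟩ := hs.exists_natAbs_lt
    exact ih _ (hN ▸ hlt) x' y' z' rfl hs'

theorem eq_of_cube_add_cube_eq_two_mul_cube {x y z : ℤ} (h : x ^ 3 + y ^ 3 = 2 * z ^ 3)
    (hxy : IsCoprime x y) (hz : z ≠ 0) : x = y :=
  by_contra fun hne => not_isNontrivialPrimitiveSolution x y z ⟨h, hxy, hz, hne⟩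

/-- The `P³₁`-set `{1, 2, 13}` is nonextendible: there is no positive integer
`d ∉ {1, 2, 13}` such that the product of any three pairwise distinct elements of
`{1, 2, 13, d}` increased by one is a perfect cube. -/
theorem one_two_thirteen_nonextendible :
    ¬ ∃ d : ℕ, 0 < d ∧ d ∉ ({1, 2, 13} : Set ℕ) ∧
      ∀ x ∈ ({1, 2, 13, d} : Set ℕ), ∀ y ∈ ({1, 2, 13, d} : Set ℕ),
        ∀ z ∈ ({1, 2, 13, d} : Set ℕ), x ≠ y → x ≠ z → y ≠ z →
          ∃ m : ℕ, 0 < m ∧ x * y * z + 1 = m ^ 3 := by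
  rintro ⟨d, hd0, hd, H⟩
  simp only [Set.mem_insert_iff, Set.mem_singleton_iff, not_or] at hd
  obtain ⟨hd1, hd2, hd13⟩ := hd
  obtain ⟨b, hb0, hb⟩ := H 1 (by simp) 13 (by simp) d (by simp) (by norm_num) (Ne.symm hd1)
    (Ne.symm hd13)
  obtain ⟨c, -, hc⟩ := H 2 (by simp) 13 (by simp) d (by simp) (by norm_num) (Ne.symm hd2)
    (Ne.symm hd13)
  have hcb : (c : ℤ) ^ 3 + 1 ^ 3 = 2 * (b : ℤ) ^ 3 := by
    rw [← Nat.cast_pow, ← Nat.cast_pow, ← hb, ← hc]; push_cast; ring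
  have hc1 : (c : ℤ) = 1 :=
    eq_of_cube_add_cube_eq_two_mul_cube hcb isCoprime_one_right (by exact_mod_cast hb0.ne')
  have : 2 * 13 * d + 1 = 1 := by rw [hc, show c = 1 by exact_mod_cast hc1, one_pow]
  omega
end

section
/- Every P^3_1-set is finite: if S is a set of positive integers such that for all pairwise distinct elements x, y, z of S the number x·y·z + 1 is a perfect cube, then S is finite. -/
set_option maxHeartbeats 1000000 in
/-- Every `P³₁`-set is finite: if `S` is a set of positive integers such that for all
pairwise distinct `x, y, z ∈ S` the number `x * y * z + 1` is a perfect cube, then `S`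
is finite. -/
theorem P31_set_finite (S : Set ℕ) (hpos : ∀ x ∈ S, 0 < x)
    (h : ∀ x ∈ S, ∀ y ∈ S, ∀ z ∈ S, x ≠ y → x ≠ z → y ≠ z →
      ∃ m : ℕ, 0 < m ∧ x * y * z + 1 = m ^ 3) : S.Finite := by
  rw [← Set.not_infinite]
  intro hinf
  -- pick four increasing elements p < q < r < s
  obtain ⟨p, hpS, hp0⟩ := hinf.exists_gt 0
  obtain ⟨q, hqS, hpq⟩ := hinf.exists_gt p
  obtain ⟨r, hrS, hqr⟩ := hinf.exists_gt q
  obtain ⟨s, hsS, hrs⟩ := hinf.exists_gt r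
  -- the key gap quantity
  set D : ℕ := (r - q) * (s - p) with hD
  have hps : p < s := hpq.trans (hqr.trans hrs)
  have hDpos : 0 < D := Nat.mul_pos (by omega) (by omega)
  -- pick a huge element w
  obtain ⟨w, hwS, hw⟩ := hinf.exists_gt (s + D ^ 3)
  have hsw : s < w := by omega
  have hpw : p < w := hps.trans hsw
  have hqw : q < w := (hqr.trans hrs).trans hsw
  have hrw : r < w := hrs.trans hsw
  -- the four cubes
  obtain ⟨m1, hm1, e1⟩ := h p hpS q hqS w hwS hpq.ne hpw.ne hqw.ne
  obtain ⟨m2, hm2, e2⟩ := h r hrS s hsS w hwS hrs.ne hrw.ne hsw.ne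
  obtain ⟨m3, hm3, e3⟩ := h p hpS r hrS w hwS (hpq.trans hqr).ne hpw.ne hrw.ne
  obtain ⟨m4, hm4, e4⟩ := h q hqS s hsS w hwS (hqr.trans hrs).ne hqw.ne hsw.ne
  set X : ℕ := m1 * m2 with hX
  set Y : ℕ := m3 * m4 with hY
  have hXc : X ^ 3 = (p * q * w + 1) * (r * s * w + 1) := by
    rw [hX, mul_pow, e1, e2]
  have hYc : Y ^ 3 = (p * r * w + 1) * (q * s * w + 1) := by
    rw [hY, mul_pow, e3, e4]
  -- the key identity : X^3 = Y^3 + w * D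
  have key : X ^ 3 = Y ^ 3 + w * D := by
    rw [hXc, hYc, hD]
    have h1 : q ≤ r := hqr.le
    have h2 : p ≤ s := hps.le
    zify [h1, h2]
    ring
  -- hence X > Y, so w * D ≥ 3Y² + 3Y + 1 > Y²
  have hYX : Y < X := by
    have : Y ^ 3 < X ^ 3 := by
      have : 0 < w * D := Nat.mul_pos (by omega) hDpos
      omega
    exact lt_of_pow_lt_pow_left₀ 3 (Nat.zero_le _) this
  have hwD : Y ^ 2 < w * D := by
    have hYX' : Y + 1 ≤ X := hYX
    have : (Y + 1) ^ 3 ≤ X ^ 3 := Nat.pow_le_pow_left hYX' 3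
    nlinarith [this, key]
  -- and Y³ > w²
  have hY3 : w ^ 2 < Y ^ 3 := by
    have hpr : 0 < p * r := Nat.mul_pos hp0 (by omega)
    have hqs : 0 < q * s := Nat.mul_pos (by omega) (by omega)
    have h1 : w + 1 ≤ p * r * w + 1 := by
      have := Nat.le_mul_of_pos_left w hpr; omega
    have h2 : w + 1 ≤ q * s * w + 1 := by
      have := Nat.le_mul_of_pos_left w hqs; omega
    have h3 : (w + 1) * (w + 1) ≤ (p * r * w + 1) * (q * s * w + 1) :=
      Nat.mul_le_mul h1 h2
    have h4 : w ^ 2 < (w + 1) * (w + 1) := by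
      have e : (w + 1) * (w + 1) = w ^ 2 + (2 * w + 1) := by ring
      rw [e]
      exact Nat.lt_add_of_pos_right (by omega)
    rw [hYc]
    exact lt_of_lt_of_le h4 h3
  -- cube everything: w⁴ < (Y³)² < (wD)³, so w < D³
  have hfin : w < D ^ 3 := by
    have c1 : (Y ^ 2) ^ 3 < (w * D) ^ 3 := Nat.pow_lt_pow_left hwD three_ne_zero
    have c2 : (w ^ 2) ^ 2 < (Y ^ 3) ^ 2 := Nat.pow_lt_pow_left hY3 two_ne_zero
    have c3 : (w ^ 2) ^ 2 < (w * D) ^ 3 := by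
      calc (w ^ 2) ^ 2 < (Y ^ 3) ^ 2 := c2
        _ = (Y ^ 2) ^ 3 := by ring
        _ < (w * D) ^ 3 := c1
    -- (w²)² = w⁴ < w³ D³ implies w < D³
    by_contra hc
    push_neg at hc
    have h5 : (w * D) ^ 3 ≤ (w ^ 2) ^ 2 := by
      calc (w * D) ^ 3 = w ^ 3 * D ^ 3 := by ring
        _ ≤ w ^ 3 * w := Nat.mul_le_mul_left _ hc
        _ = (w ^ 2) ^ 2 := by ring
    omega
  omega
end

section
/- The group of units of the ring of integers of the cubic field ℚ(∛2) is exactly {± θ^n : n ∈ ℤ}, where θ = ∛2 - 1; that is, θ is (up to inversion and sign) the fundamental unit of ℚ(∛2). -/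
open IntermediateField

noncomputable def cbrtTwo : ℝ := (2 : ℝ) ^ ((1 : ℝ) / 3)

noncomputable def QCbrtTwo : IntermediateField ℚ ℝ := IntermediateField.adjoin ℚ {cbrtTwo}

noncomputable def thetaElt : QCbrtTwo :=
  ⟨cbrtTwo, IntermediateField.mem_adjoin_simple_self ℚ cbrtTwo⟩ - 1

/-!
Write an element of `ℚ(∛2)` as `x = a + b ∛2 + c ∛2²` with `a, b, c ∈ ℚ`. If `x` is integral, the
traces of `x`, `x ∛2` and `x ∛2²` show that `6x ∈ ℤ[∛2]`. The norm of `6x` is divisible by `6³`,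
and because `2` and `3` are totally ramified, the norm form `a³ + 2b³ + 4c³ - 6abc` is divisible by
`p³` (`p = 2, 3`) only if `p` divides `a`, `b` and `c`; hence `x ∈ ℤ[∛2]`.

If a unit has real value `1 < x < ε := 1 + ∛2 + ∛2² = θ⁻¹`, its complex conjugates satisfy
`|σ x|² = N(x) / x = 1 / x < 1`, which confines `a, b, c` to `{0, 1}`; among these eight triples
only `x = 1` and `x = ε` have norm `±1`. So `ε` is the least unit greater than `1`, and by the
archimedean property every unit is `±εⁿ`.
-/

open Polynomial NumberField

def cubicNorm {R : Type*} [CommRing R] (a b c : R) : R :=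
  a ^ 3 + 2 * b ^ 3 + 4 * c ^ 3 - 6 * a * b * c

@[norm_cast]
lemma Int.cast_cubicNorm {R : Type*} [CommRing R] (a b c : ℤ) :
    ((cubicNorm a b c : ℤ) : R) = cubicNorm (a : R) b c := by
  simp [cubicNorm]

lemma cubicNorm_zmod_eight :
    ∀ x y z : ZMod 8, cubicNorm x y z = 0 → 4 * x = 0 ∧ 4 * y = 0 ∧ 4 * z = 0 := by
  decide

lemma cubicNorm_zmod_twentySeven :
    ∀ x y z : ZMod 27, cubicNorm x y z = 0 → 9 * x = 0 ∧ 9 * y = 0 ∧ 9 * z = 0 := by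
  decide

lemma dvd_mul_of_dvd_cubicNorm {n k : ℕ}
    (hzmod : ∀ x y z : ZMod n, cubicNorm x y z = 0 →
      (k : ZMod n) * x = 0 ∧ (k : ZMod n) * y = 0 ∧ (k : ZMod n) * z = 0)
    {p q r : ℤ} (h : (n : ℤ) ∣ cubicNorm p q r) :
    (n : ℤ) ∣ k * p ∧ (n : ℤ) ∣ k * q ∧ (n : ℤ) ∣ k * r := by
  simp only [← ZMod.intCast_zmod_eq_zero_iff_dvd] at h ⊢
  push_cast at h ⊢
  exact hzmod _ _ _ h

lemma six_dvd_of_dvd_cubicNorm {p q r : ℤ} (h : 216 ∣ cubicNorm p q r) :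
    6 ∣ p ∧ 6 ∣ q ∧ 6 ∣ r := by
  have h2 := dvd_mul_of_dvd_cubicNorm (k := 4) cubicNorm_zmod_eight (dvd_trans (by norm_num) h)
  have h3 := dvd_mul_of_dvd_cubicNorm (k := 9) cubicNorm_zmod_twentySeven
    (dvd_trans (by norm_num) h)
  push_cast at h2 h3
  omega

lemma exists_intCast_eq_of_isIntegral {q : ℚ} (h : IsIntegral ℤ q) : ∃ n : ℤ, (n : ℚ) = q := by
  simpa using IsIntegrallyClosed.isIntegral_iff.mp h

theorem exists_abs_eq_zpow_of_forall_le {G 𝕜 : Type*} [Group G] [Field 𝕜] [LinearOrder 𝕜]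
    [IsStrictOrderedRing 𝕜] [Archimedean 𝕜] (f : G →* 𝕜) {g₀ : G} (h₀ : 1 < f g₀)
    (hmin : ∀ g, 1 < |f g| → f g₀ ≤ |f g|) (g : G) : ∃ n : ℤ, |f g| = f g₀ ^ n := by
  have hne : f g ≠ 0 := left_ne_zero_of_mul_eq_one (map_mul_eq_one f (mul_inv_cancel g))
  obtain ⟨n, hle, hlt⟩ := exists_mem_Ico_zpow (abs_pos.2 hne) h₀
  have hpow : 0 < f g₀ ^ n := zpow_pos (zero_lt_one.trans h₀) n
  have hquot : |f (g * g₀ ^ (-n))| = |f g| / f g₀ ^ n := by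
    rw [map_mul, map_zpow, zpow_neg, abs_mul, abs_inv, abs_of_pos hpow, div_eq_mul_inv]
  refine ⟨n, (eq_of_le_of_not_lt' hle fun hgt => ?_)⟩
  have := hmin _ (by rwa [hquot, one_lt_div hpow])
  rw [hquot, le_div_iff₀ hpow, ← zpow_one_add₀ (zero_lt_one.trans h₀).ne', add_comm] at this
  exact this.not_gt hlt

lemma cbrtTwo_pow_three : cbrtTwo ^ 3 = 2 := by
  rw [cbrtTwo, ← Real.rpow_natCast, ← Real.rpow_mul (by norm_num)]
  norm_num

lemma cbrtTwo_pos : 0 < cbrtTwo := Real.rpow_pos_of_pos two_pos _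

lemma cbrtTwo_mem_Ioo : cbrtTwo ∈ Set.Ioo 1.259 1.26 :=
  ⟨lt_of_pow_lt_pow_left₀ 3 cbrtTwo_pos.le (by norm_num [cbrtTwo_pow_three]),
    lt_of_pow_lt_pow_left₀ 3 (by norm_num) (by norm_num [cbrtTwo_pow_three])⟩

lemma Rat.pow_three_ne_two (q : ℚ) : q ^ 3 ≠ 2 := by
  intro h
  have h3 := congrArg (padicValRat 2) h
  have h2 : padicValRat 2 2 = 1 := by exact_mod_cast padicValRat.self (p := 2) one_lt_two
  rw [padicValRat.pow, h2] at h3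
  omega

lemma minpoly_cbrtTwo : minpoly ℚ cbrtTwo = X ^ 3 - C 2 :=
  (minpoly.eq_of_irreducible_of_monic
    (X_pow_sub_C_irreducible_of_prime Nat.prime_three Rat.pow_three_ne_two)
    (by simp [cbrtTwo_pow_three]) (monic_X_pow_sub_C _ three_ne_zero)).symm

lemma isIntegral_cbrtTwo : IsIntegral ℚ cbrtTwo :=
  ⟨X ^ 3 - C 2, monic_X_pow_sub_C _ three_ne_zero, by simp [cbrtTwo_pow_three]⟩

instance : FiniteDimensional ℚ QCbrtTwo := adjoin.finiteDimensional isIntegral_cbrtTwo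

instance : NumberField QCbrtTwo where

noncomputable def cbrtTwoElt : QCbrtTwo := ⟨cbrtTwo, mem_adjoin_simple_self ℚ cbrtTwo⟩

lemma cbrtTwoElt_pow_three : cbrtTwoElt ^ 3 = 2 :=
  Subtype.ext (by push_cast [cbrtTwoElt]; exact cbrtTwo_pow_three)

noncomputable def cbrtTwoPowerBasis : PowerBasis ℚ QCbrtTwo :=
  adjoin.powerBasis isIntegral_cbrtTwo

lemma cbrtTwoPowerBasis_dim : cbrtTwoPowerBasis.dim = 3 := by
  simp [cbrtTwoPowerBasis, minpoly_cbrtTwo]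

noncomputable def cbrtTwoBasis : Module.Basis (Fin 3) ℚ QCbrtTwo :=
  cbrtTwoPowerBasis.basis.reindex (finCongr cbrtTwoPowerBasis_dim)

lemma cbrtTwoBasis_apply (i : Fin 3) : cbrtTwoBasis i = cbrtTwoElt ^ (i : ℕ) := by
  rw [cbrtTwoBasis, Module.Basis.reindex_apply, PowerBasis.basis_eq_pow]
  rfl

noncomputable def ofCoeffs (a b c : ℚ) : QCbrtTwo := a • 1 + b • cbrtTwoElt + c • cbrtTwoElt ^ 2

lemma ofCoeffs_eq_sum (a b c : ℚ) : ofCoeffs a b c = ∑ i, ![a, b, c] i • cbrtTwoBasis i := by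
  simp [ofCoeffs, Fin.sum_univ_three, cbrtTwoBasis_apply]

lemma exists_eq_ofCoeffs (x : QCbrtTwo) : ∃ a b c : ℚ, x = ofCoeffs a b c := by
  refine ⟨cbrtTwoBasis.repr x 0, cbrtTwoBasis.repr x 1, cbrtTwoBasis.repr x 2, ?_⟩
  conv_lhs => rw [← cbrtTwoBasis.sum_repr x]
  rw [ofCoeffs_eq_sum]
  congr! 2 with i
  fin_cases i <;> rfl

lemma cbrtTwoBasis_repr_ofCoeffs (a b c : ℚ) (i : Fin 3) :
    cbrtTwoBasis.repr (ofCoeffs a b c) i = ![a, b, c] i := by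
  rw [ofCoeffs_eq_sum, cbrtTwoBasis.repr_sum_self]

lemma ofCoeffs_mul_cbrtTwoElt (a b c : ℚ) :
    ofCoeffs a b c * cbrtTwoElt = ofCoeffs (2 * c) a b := by
  simp only [ofCoeffs, Algebra.smul_def, map_mul, map_ofNat]
  linear_combination algebraMap ℚ QCbrtTwo c * cbrtTwoElt_pow_three

lemma ofCoeffs_mul_cbrtTwoElt_sq (a b c : ℚ) :
    ofCoeffs a b c * cbrtTwoElt ^ 2 = ofCoeffs (2 * b) (2 * c) a := by
  rw [sq, ← mul_assoc, ofCoeffs_mul_cbrtTwoElt, ofCoeffs_mul_cbrtTwoElt]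

lemma leftMulMatrix_ofCoeffs (a b c : ℚ) :
    Algebra.leftMulMatrix cbrtTwoBasis (ofCoeffs a b c) = !![a, 2*c, 2*b; b, a, 2*c; c, b, a] := by
  ext i j
  rw [Algebra.leftMulMatrix_eq_repr_mul, cbrtTwoBasis_apply]
  fin_cases j <;>
    simp only [pow_zero, pow_one, mul_one,
      ofCoeffs_mul_cbrtTwoElt, ofCoeffs_mul_cbrtTwoElt_sq, cbrtTwoBasis_repr_ofCoeffs] <;>
    fin_cases i <;> simp

lemma norm_ofCoeffs (a b c : ℚ) : Algebra.norm ℚ (ofCoeffs a b c) = cubicNorm a b c := by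
  rw [Algebra.norm_eq_matrix_det cbrtTwoBasis, leftMulMatrix_ofCoeffs, Matrix.det_fin_three,
    cubicNorm]
  simp only [Matrix.of_apply, Matrix.cons_val', Matrix.cons_val_zero, Matrix.cons_val_fin_one,
    Matrix.cons_val_one, Matrix.cons_val]
  ring

lemma trace_ofCoeffs (a b c : ℚ) : Algebra.trace ℚ QCbrtTwo (ofCoeffs a b c) = 3 * a := by
  rw [Algebra.trace_eq_matrix_trace cbrtTwoBasis, leftMulMatrix_ofCoeffs, Matrix.trace_fin_three]
  simp only [Matrix.of_apply, Matrix.cons_val', Matrix.cons_val_zero, Matrix.cons_val_fin_one,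
    Matrix.cons_val_one, Matrix.cons_val]
  ring

lemma isIntegral_cbrtTwoElt : IsIntegral ℤ cbrtTwoElt :=
  ⟨X ^ 3 - C 2, monic_X_pow_sub_C _ three_ne_zero, by simp [cbrtTwoElt_pow_three]⟩

lemma exists_int_eq_ofCoeffs {y : QCbrtTwo} (hy : IsIntegral ℤ y) :
    ∃ a b c : ℤ, y = ofCoeffs a b c := by
  obtain ⟨a, b, c, rfl⟩ := exists_eq_ofCoeffs y
  have int_trace {z : QCbrtTwo} (hz : IsIntegral ℤ z) :
      ∃ n : ℤ, (n : ℚ) = Algebra.trace ℚ QCbrtTwo z :=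
    exists_intCast_eq_of_isIntegral (Algebra.isIntegral_trace hz)
  obtain ⟨p, hp⟩ := int_trace hy
  obtain ⟨r, hr⟩ := int_trace (hy.mul isIntegral_cbrtTwoElt)
  obtain ⟨q, hq⟩ := int_trace (hy.mul (isIntegral_cbrtTwoElt.pow 2))
  obtain ⟨n, hn⟩ := exists_intCast_eq_of_isIntegral (Algebra.isIntegral_norm ℚ hy)
  rw [trace_ofCoeffs] at hp
  rw [ofCoeffs_mul_cbrtTwoElt, trace_ofCoeffs] at hr
  rw [ofCoeffs_mul_cbrtTwoElt_sq, trace_ofCoeffs] at hq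
  rw [norm_ofCoeffs] at hn
  -- `6 y = 2p + q ∛2 + r ∛2²` lies in `ℤ[∛2]` and has norm `6³ N(y)`.
  have h216 : 216 ∣ cubicNorm (2 * p) q r := by
    refine ⟨n, Int.cast_injective (α := ℚ) ?_⟩
    push_cast
    rw [hp, hq, hr, hn, cubicNorm, cubicNorm]
    ring
  obtain ⟨⟨a', ha'⟩, ⟨b', hb'⟩, ⟨c', hc'⟩⟩ := six_dvd_of_dvd_cubicNorm h216
  refine ⟨a', b', c', ?_⟩
  qify at ha' hb' hc'
  congr 1 <;> linarith

lemma coe_ofCoeffs (a b c : ℚ) :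
    ((ofCoeffs a b c : QCbrtTwo) : ℝ) = a + b * cbrtTwo + c * cbrtTwo ^ 2 := by
  simp only [ofCoeffs]
  push_cast [Rat.smul_def]
  simp [cbrtTwoElt]

-- The second factor is `4 |σ x|²` for the complex embedding `σ` sending `∛2` to `ω ∛2`.
lemma four_mul_cubicNorm (a b c : ℝ) :
    4 * cubicNorm a b c = (a + b * cbrtTwo + c * cbrtTwo ^ 2) *
      ((2 * a - b * cbrtTwo - c * cbrtTwo ^ 2) ^ 2 + 3 * (b * cbrtTwo - c * cbrtTwo ^ 2) ^ 2) := by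
  rw [cubicNorm]
  linear_combination (-4) * (b ^ 3 + 2 * c ^ 3 + c ^ 3 * cbrtTwo ^ 3 - 3 * a * b * c) *
    cbrtTwo_pow_three

lemma coeffs_mem_Icc_of_mem_Ioo {a b c : ℤ} (hN : |cubicNorm a b c| = 1)
    (hx : (a + b * cbrtTwo + c * cbrtTwo ^ 2 : ℝ) ∈ Set.Ioo 1 (1 + cbrtTwo + cbrtTwo ^ 2)) :
    a ∈ Set.Icc 0 1 ∧ b ∈ Set.Icc 0 1 ∧ c ∈ Set.Icc 0 1 := by
  obtain ⟨hα₁, hα₂⟩ := cbrtTwo_mem_Ioo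
  have hα₃ : 1.585 < cbrtTwo ^ 2 := by nlinarith
  have hα₄ : cbrtTwo ^ 2 < 1.5876 := by nlinarith
  have hid := four_mul_cubicNorm a b c
  set x : ℝ := a + b * cbrtTwo + c * cbrtTwo ^ 2
  set s : ℝ := 2 * a - b * cbrtTwo - c * cbrtTwo ^ 2
  set d : ℝ := b * cbrtTwo - c * cbrtTwo ^ 2
  obtain ⟨hx₁, hx₂⟩ := hx
  have hxS : x * (s ^ 2 + 3 * d ^ 2) = 4 := by
    have hpos : 0 ≤ x * (s ^ 2 + 3 * d ^ 2) := mul_nonneg (by linarith) (by positivity)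
    rw [← abs_of_nonneg hpos, ← hid, abs_mul, ← Int.cast_cubicNorm, ← Int.cast_abs, hN]
    norm_num
  obtain ⟨hs₁, hs₂⟩ := abs_lt_of_sq_lt_sq' (by nlinarith : s ^ 2 < 2 ^ 2) zero_le_two
  obtain ⟨hd₁, hd₂⟩ := abs_lt_of_sq_lt_sq' (by nlinarith : d ^ 2 < 1.16 ^ 2) (by norm_num)
  have ha : (-1 : ℝ) < a ∧ (a : ℝ) < 2 := ⟨by linarith, by linarith⟩
  have hb : (-1 : ℝ) < b ∧ (b : ℝ) < 2 := ⟨by nlinarith, by nlinarith⟩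
  have hc : (-1 : ℝ) < c ∧ (c : ℝ) < 2 := ⟨by nlinarith, by nlinarith⟩
  norm_cast at ha hb hc
  simp only [Set.mem_Icc]
  omega

lemma add_mul_cbrtTwo_notMem_Ioo {a b c : ℤ} (hN : |cubicNorm a b c| = 1) :
    (a + b * cbrtTwo + c * cbrtTwo ^ 2 : ℝ) ∉ Set.Ioo 1 (1 + cbrtTwo + cbrtTwo ^ 2) := by
  intro hx
  obtain ⟨⟨ha₀, ha₁⟩, ⟨hb₀, hb₁⟩, ⟨hc₀, hc₁⟩⟩ := coeffs_mem_Icc_of_mem_Ioo hN hx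
  revert hN hx
  interval_cases a <;> interval_cases b <;> interval_cases c <;> norm_num [cubicNorm]

noncomputable def cbrtTwoInt : 𝓞 QCbrtTwo := ⟨cbrtTwoElt, isIntegral_cbrtTwoElt⟩

lemma cbrtTwoInt_pow_three : cbrtTwoInt ^ 3 = 2 :=
  RingOfIntegers.ext (by push_cast; exact cbrtTwoElt_pow_three)

noncomputable def thetaUnit : (𝓞 QCbrtTwo)ˣ :=
  Units.mkOfMulEqOne (cbrtTwoInt - 1) (1 + cbrtTwoInt + cbrtTwoInt ^ 2)
    (by linear_combination cbrtTwoInt_pow_three)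

noncomputable def unitsToReal : (𝓞 QCbrtTwo)ˣ →* ℝ :=
  (algebraMap QCbrtTwo ℝ).toMonoidHom.comp
    ((algebraMap (𝓞 QCbrtTwo) QCbrtTwo).toMonoidHom.comp (Units.coeHom _))

lemma unitsToReal_apply (u : (𝓞 QCbrtTwo)ˣ) :
    unitsToReal u = (((u : 𝓞 QCbrtTwo) : QCbrtTwo) : ℝ) := rfl

lemma unitsToReal_injective : Function.Injective unitsToReal :=
  Subtype.val_injective.comp (Units.coe_injective QCbrtTwo)

lemma unitsToReal_neg (u : (𝓞 QCbrtTwo)ˣ) : unitsToReal (-u) = -unitsToReal u := by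
  simp [unitsToReal_apply]

lemma unitsToReal_thetaUnit_inv : unitsToReal thetaUnit⁻¹ = 1 + cbrtTwo + cbrtTwo ^ 2 := by
  change (((1 + cbrtTwoInt + cbrtTwoInt ^ 2 : 𝓞 QCbrtTwo) : QCbrtTwo) : ℝ) = _
  push_cast
  rfl

lemma unitsToReal_notMem_Ioo (u : (𝓞 QCbrtTwo)ˣ) :
    unitsToReal u ∉ Set.Ioo 1 (1 + cbrtTwo + cbrtTwo ^ 2) := by
  obtain ⟨a, b, c, hu⟩ : ∃ a b c : ℤ, ((u : 𝓞 QCbrtTwo) : QCbrtTwo) = ofCoeffs a b c :=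
    exists_int_eq_ofCoeffs (RingOfIntegers.isIntegral_coe _)
  have hN : |cubicNorm a b c| = 1 := by
    have := Units.norm QCbrtTwo u
    rw [← Units.coe_coe, hu, norm_ofCoeffs] at this
    exact_mod_cast this
  rw [unitsToReal_apply, hu, coe_ofCoeffs]
  push_cast
  exact add_mul_cbrtTwo_notMem_Ioo hN

lemma le_abs_unitsToReal (u : (𝓞 QCbrtTwo)ˣ) (h : 1 < |unitsToReal u|) :
    1 + cbrtTwo + cbrtTwo ^ 2 ≤ |unitsToReal u| := by
  obtain ⟨v, hv⟩ : ∃ v, unitsToReal v = |unitsToReal u| := by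
    rcases abs_choice (unitsToReal u) with h | h
    · exact ⟨u, h.symm⟩
    · exact ⟨-u, by rw [unitsToReal_neg, h]⟩
  rw [← hv] at h ⊢
  exact not_lt.1 fun h' => unitsToReal_notMem_Ioo v ⟨h, h'⟩

lemma eq_thetaUnit_zpow_or_eq_neg (u : (𝓞 QCbrtTwo)ˣ) :
    ∃ n : ℤ, u = thetaUnit ^ n ∨ u = -thetaUnit ^ n := by
  have h₀ : 1 < unitsToReal thetaUnit⁻¹ := by
    rw [unitsToReal_thetaUnit_inv]
    nlinarith [cbrtTwo_pos]
  obtain ⟨n, hn⟩ := exists_abs_eq_zpow_of_forall_le unitsToReal h₀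
    (by simpa only [unitsToReal_thetaUnit_inv] using le_abs_unitsToReal) u
  rw [← map_zpow, inv_zpow'] at hn
  refine ⟨-n, ?_⟩
  rcases (abs_eq (hn ▸ abs_nonneg _)).1 hn with h | h
  · exact Or.inl (unitsToReal_injective h)
  · exact Or.inr (unitsToReal_injective (by rw [h, unitsToReal_neg]))

lemma coe_thetaUnit_zpow (n : ℤ) :
    (((thetaUnit ^ n : (𝓞 QCbrtTwo)ˣ) : 𝓞 QCbrtTwo) : QCbrtTwo) = thetaElt ^ n := by
  rw [Units.coe_coe, Units.coe_zpow]
  rfl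

/-- The group of units of the ring of integers of `ℚ(∛2)` is exactly
`{± θⁿ : n ∈ ℤ}` where `θ = ∛2 - 1`. -/
theorem units_of_QCbrtTwo :
    {x : QCbrtTwo | ∃ u : (NumberField.RingOfIntegers QCbrtTwo)ˣ,
        ((u : NumberField.RingOfIntegers QCbrtTwo) : QCbrtTwo) = x}
      = {x : QCbrtTwo | ∃ n : ℤ, x = thetaElt ^ n ∨ x = -thetaElt ^ n} := by
  ext x
  constructor
  · rintro ⟨u, rfl⟩
    obtain ⟨n, rfl | rfl⟩ := eq_thetaUnit_zpow_or_eq_neg u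
    · exact ⟨n, Or.inl (coe_thetaUnit_zpow n)⟩
    · exact ⟨n, Or.inr (by simp [coe_thetaUnit_zpow])⟩
  · rintro ⟨n, rfl | rfl⟩
    · exact ⟨thetaUnit ^ n, coe_thetaUnit_zpow n⟩
    · exact ⟨-thetaUnit ^ n, by simp [coe_thetaUnit_zpow]⟩
end
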